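/- If K is a compact Hausdorff space with hd(K) ≥ λ⁺ for some infinite cardinal λ, then K has a bidiscrete system of cardinality λ⁺. -/

import Mathlib

/-!
A subspace of density `> λ` carries a left-separated sequence `(x_t)_{t < λ⁺}`, and Urysohn's
lemma gives `g_t` vanishing on `cl {x_s : s < t}` with `g_t (x_t) = 1`. By transfinite recursion
choose `t_γ` increasing and `a_γ ∈ cl {x_s : s < t_γ}` at which every earlier `g_{t_β}` takes
the same value as at `x_{t_γ}`; the pairs `(a_γ, x_{t_γ})` with the functions `g_{t_γ}` are then
bidiscrete. Stage `γ` is possible because the earlier functions map `K` to `ℝ^γ`, where a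
sequence staying outside compact sets that contain its predecessors has length at most `λ`:
the `λ` rational half-spaces of `ℝ^γ` separate points, so each such compact set is covered by
a finite family of them missing the current point, and distinct points get distinct families.
-/

open Cardinal

universe u

/-- The density of a topological space: the least cardinality of a dense subset. -/
noncomputable def density (X : Type u) [TopologicalSpace X] : Cardinal.{u} :=
  sInf {c : Cardinal.{u} | ∃ s : Set X, Dense s ∧ #s = c}

/-- The hereditary density of a topological space: the supremum of the densities of
all its subspaces. -/
noncomputable def hereditaryDensity (X : Type u) [TopologicalSpace X] : Cardinal.{u} :=
  ⨆ Y : Set X, density Y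

/-- A set of pairs of points of `K` is a *bidiscrete system* in `K` if there are
continuous real-valued functions, one for each pair `p` in the system, taking the value `0`
on the first coordinate of `p`, the value `1` on the second coordinate of `p`, and taking
equal values on the two coordinates of every other pair of the system. -/
def IsBidiscrete {K : Type u} [TopologicalSpace K] (S : Set (K × K)) : Prop :=
  ∃ f : S → C(K, ℝ), ∀ p : S,
    f p (p : K × K).1 = 0 ∧ f p (p : K × K).2 = 1 ∧
    ∀ q : S, q ≠ p → f p (q : K × K).1 = f p (q : K × K).2

open Set Function Topology

theorem WellFoundedLT.exists_fun_by_recursion {ι α : Type*} [LT ι] [WellFoundedLT ι]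
    (Q : (i : ι) → ((j : ι) → j < i → α) → α → Prop) (H : ∀ i prev, ∃ a, Q i prev a) :
    ∃ g : ι → α, ∀ i, Q i (fun j _ => g j) (g i) :=
  ⟨wellFounded_lt.fix fun i prev => (H i prev).choose, fun i => by
    rw [wellFounded_lt.fix_eq]
    exact (H i _).choose_spec⟩

section Density

variable {X : Type u} [TopologicalSpace X]

theorem density_le_mk {s : Set X} (hs : Dense s) : density X ≤ #s :=
  csInf_le' ⟨s, hs, rfl⟩

def IsLeftSeparated {ι : Type*} [Preorder ι] (x : ι → X) : Prop :=
  ∀ i, x i ∉ closure (x '' Iio i)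

theorem IsLeftSeparated.comp_isInducing {Y ι : Type*} [TopologicalSpace Y] [Preorder ι]
    {x : ι → X} (hx : IsLeftSeparated x) {f : X → Y} (hf : IsInducing f) :
    IsLeftSeparated (f ∘ x) := by
  intro i hi
  apply hx i
  rwa [hf.closure_eq_preimage_closure_image, image_image]

theorem exists_isLeftSeparated_of_lt_density {ι : Type u} [LinearOrder ι] [WellFoundedLT ι]
    {l : Cardinal.{u}} (hIio : ∀ i : ι, #(Iio i) ≤ l) (hX : l < density X) :
    ∃ x : ι → X, IsLeftSeparated x := by
  obtain ⟨x, hx⟩ := WellFoundedLT.exists_fun_by_recursion (ι := ι) (α := X)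
    (fun i prev a => a ∉ closure (range fun j : Iio i => prev j j.2)) fun i prev => by
      by_contra! h
      have hdense : Dense (range fun j : Iio i => prev j j.2) := h
      exact (hX.trans_le (density_le_mk hdense)).not_ge (mk_range_le.trans (hIio i))
  exact ⟨x, fun i => by rw [image_eq_range]; exact hx i⟩

end Density

theorem mk_le_mk_finset_of_separating {X : Type*} [TopologicalSpace X] {A ι : Type u}
    [LinearOrder ι] (U : A → Set X) (hU : ∀ c, IsOpen (U c))
    (hsep : ∀ y z, y ≠ z → ∃ c, z ∈ U c ∧ y ∉ U c) (y : ι → X) (C : ι → Set X)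
    (hC : ∀ t, IsCompact (C t)) (hlt : ∀ s t, s < t → y s ∈ C t) (hy : ∀ t, y t ∉ C t) :
    #ι ≤ #(Finset A) := by
  have hcover : ∀ t, ∃ b ⊆ {c | y t ∉ U c}, b.Finite ∧ C t ⊆ ⋃ c ∈ b, U c := fun t =>
    (hC t).elim_finite_subcover_image (fun c _ => hU c) fun z hz => by
      obtain ⟨c, hzc, hyc⟩ := hsep (y t) z (fun h => hy t (h ▸ hz))
      exact mem_biUnion hyc hzc
  choose b hbU hbfin hbC using hcover
  refine mk_le_of_injective (f := fun t => (hbfin t).toFinset) (Injective.of_lt_imp_ne ?_)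
  intro s t hst hb
  obtain ⟨c, hc, hyc⟩ := mem_iUnion₂.mp (hbC t (hlt s t hst))
  rw [← Finite.mem_toFinset (hbfin t), ← hb, Finite.mem_toFinset] at hc
  exact hbU s hc hyc

def ratHalfSpace (J : Type*) : (J × ℚ) ⊕ (J × ℚ) → Set (J → ℝ) :=
  Sum.elim (fun c => {z | z c.1 < c.2}) (fun c => {z | (c.2 : ℝ) < z c.1})

section RatHalfSpace

variable {J : Type*}

theorem isOpen_ratHalfSpace : ∀ c, IsOpen (ratHalfSpace J c)
  | .inl c => isOpen_lt (continuous_apply c.1) continuous_const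
  | .inr c => isOpen_lt continuous_const (continuous_apply c.1)

theorem exists_ratHalfSpace_mem_notMem (y z : J → ℝ) (hyz : y ≠ z) :
    ∃ c, z ∈ ratHalfSpace J c ∧ y ∉ ratHalfSpace J c := by
  obtain ⟨j, hj⟩ := Function.ne_iff.mp hyz
  rcases hj.lt_or_gt with hlt | hlt
  · obtain ⟨q, hyq, hqz⟩ := exists_rat_btwn hlt
    exact ⟨.inr (j, q), hqz, hyq.not_gt⟩
  · obtain ⟨q, hzq, hqy⟩ := exists_rat_btwn hlt
    exact ⟨.inl (j, q), hzq, hqy.not_gt⟩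

end RatHalfSpace

theorem mk_finset_ratHalfSpace_index_le (J : Type u) :
    #(Finset ((J × ℚ) ⊕ (J × ℚ))) ≤ max ℵ₀ #J := by
  classical
  have hJℚ : #(J × ℚ) ≤ max ℵ₀ #J := by
    rw [mk_prod, Cardinal.mkRat, lift_uzero, lift_aleph0]
    exact (mul_le_max _ _).trans_eq (by rw [max_assoc, max_self, max_comm])
  calc #(Finset _) ≤ #(List _) := mk_le_of_surjective List.toFinset_surjective
    _ ≤ max ℵ₀ #((J × ℚ) ⊕ (J × ℚ)) := mk_list_le_max _
    _ ≤ max ℵ₀ #J := by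
      rw [mk_sum, lift_id]
      exact max_le (le_max_left _ _) (add_le_of_le (le_max_left _ _) hJℚ hJℚ)

theorem exists_mem_closure_image_Iio_forall_apply_eq {K : Type*} [TopologicalSpace K]
    [CompactSpace K] {ι J : Type u} [LinearOrder ι] (x : ι → K) (f : J → C(K, ℝ))
    (hι : max ℵ₀ #J < #ι) : ∃ t, ∃ a ∈ closure (x '' Iio t), ∀ j, f j a = f j (x t) := by
  by_contra! h
  let Φ : K → J → ℝ := fun z j => f j z
  have hΦ : Continuous Φ := continuous_pi fun j => (f j).continuous
  refine hι.not_ge (le_trans ?_ (mk_finset_ratHalfSpace_index_le J))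
  refine mk_le_mk_finset_of_separating (ratHalfSpace J) isOpen_ratHalfSpace
    exists_ratHalfSpace_mem_notMem (Φ ∘ x) (fun t => Φ '' closure (x '' Iio t))
    (fun t => isClosed_closure.isCompact.image hΦ)
    (fun s t hst => mem_image_of_mem Φ (subset_closure (mem_image_of_mem x hst)))
    (fun t ⟨a, ha, hat⟩ => ?_)
  obtain ⟨j, hj⟩ := h t a ha
  exact hj (congrFun hat j)

theorem lt_mk_setOf_forall_lt {ι J : Type u} [LinearOrder ι] {l : Cardinal.{u}} (hl : ℵ₀ ≤ l)
    (hIio : ∀ i : ι, #(Iio i) ≤ l) (hι : l < #ι) (b : J → ι) (hJ : #J ≤ l) :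
    l < #{t | ∀ j, b j < t} := by
  by_contra! hle
  have hcompl : {t | ∀ j, b j < t}ᶜ ⊆ range b ∪ ⋃ j, Iio (b j) := by
    intro t ht
    obtain ⟨j, hj⟩ : ∃ j, t ≤ b j := by simpa using ht
    rcases hj.lt_or_eq with hlt | rfl
    · exact .inr (mem_iUnion.mpr ⟨j, hlt⟩)
    · exact .inl ⟨j, rfl⟩
  have hcompl_card : #({t | ∀ j, b j < t}ᶜ : Set ι) ≤ l :=
    calc _ ≤ #(range b ∪ ⋃ j, Iio (b j) : Set ι) := mk_le_mk_of_subset hcompl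
      _ ≤ l + l * l := (mk_union_le _ _).trans (add_le_add (mk_range_le.trans hJ)
          ((mk_iUnion_le _).trans (mul_le_mul' hJ (ciSup_le' fun j => hIio (b j)))))
      _ = l := by rw [mul_eq_self hl, add_eq_self hl]
  refine hι.not_ge ?_
  rw [← mk_sum_compl {t | ∀ j, b j < t}, ← add_eq_self hl]
  exact add_le_add hle hcompl_card

section Bidiscrete

variable {ι K : Type u} [TopologicalSpace K]

def IsBidiscreteFamily (p : ι → K × K) (F : ι → C(K, ℝ)) : Prop :=
  ∀ γ, F γ (p γ).1 = 0 ∧ F γ (p γ).2 = 1 ∧ ∀ δ, δ ≠ γ → F γ (p δ).1 = F γ (p δ).2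

variable {p : ι → K × K} {F : ι → C(K, ℝ)}

theorem IsBidiscreteFamily.injective (h : IsBidiscreteFamily p F) : Injective p := by
  intro δ γ hp
  by_contra hne
  have hγ := (h γ).2.2 δ hne
  rw [hp, (h γ).1, (h γ).2.1] at hγ
  exact zero_ne_one hγ

theorem IsBidiscreteFamily.isBidiscrete_range (h : IsBidiscreteFamily p F) :
    IsBidiscrete (range p) := by
  let e := Equiv.ofInjective p h.injective
  refine ⟨fun s => F (e.symm s), fun s => ?_⟩
  obtain ⟨γ, rfl⟩ := e.surjective s
  refine ⟨by simpa [e] using (h γ).1, by simpa [e] using (h γ).2.1, fun q hq => ?_⟩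
  obtain ⟨δ, rfl⟩ := e.surjective q
  simpa [e] using (h γ).2.2 δ (fun hδ => hq (hδ ▸ rfl))

end Bidiscrete

theorem IsLeftSeparated.exists_isBidiscreteFamily {K ι : Type u} [TopologicalSpace K]
    [CompactSpace K] [T2Space K] [LinearOrder ι] [WellFoundedLT ι] {l : Cardinal.{u}}
    (hl : ℵ₀ ≤ l) (hIio : ∀ i : ι, #(Iio i) ≤ l) (hι : l < #ι) {x : ι → K}
    (hx : IsLeftSeparated x) : ∃ (p : ι → K × K) (F : ι → C(K, ℝ)), IsBidiscreteFamily p F := by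
  choose g hg0 hg1 using fun t => (exists_continuous_zero_one_of_isClosed isClosed_closure
    isClosed_singleton (disjoint_singleton_right.mpr (hx t))).imp fun _ hf => hf.imp_right And.left
  obtain ⟨ta, hta⟩ := WellFoundedLT.exists_fun_by_recursion (ι := ι) (α := ι × K)
    (fun _ prev ta => (∀ β h, (prev β h).1 < ta.1) ∧ ta.2 ∈ closure (x '' Iio ta.1) ∧
      ∀ β h, g (prev β h).1 ta.2 = g (prev β h).1 (x ta.1)) fun γ prev => by
    have htail := lt_mk_setOf_forall_lt hl hIio hι (fun β : Iio γ => (prev β β.2).1) (hIio γ)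
    obtain ⟨⟨t, ht⟩, a, ha, hga⟩ := exists_mem_closure_image_Iio_forall_apply_eq
      (x ∘ Subtype.val) (fun β : Iio γ => g (prev β β.2).1)
      (max_lt (hl.trans_lt htail) ((hIio γ).trans_lt htail))
    have hsub : (x ∘ Subtype.val) '' Iio ⟨t, ht⟩ ⊆ x '' Iio t := by
      rintro _ ⟨s, hs, rfl⟩
      exact ⟨s, hs, rfl⟩
    exact ⟨(t, a), fun β hβ => ht ⟨β, hβ⟩, closure_mono hsub ha, fun β hβ => hga ⟨β, hβ⟩⟩
  have hmono : StrictMono fun γ => (ta γ).1 := fun β γ h => (hta γ).1 β h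
  refine ⟨fun γ => ((ta γ).2, x (ta γ).1), fun γ => g (ta γ).1,
    fun γ => ⟨hg0 _ (hta γ).2.1, hg1 _ rfl, fun δ hδ => ?_⟩⟩
  rcases hδ.lt_or_gt with hδγ | hγδ
  · have hsub : closure (x '' Iio (ta δ).1) ⊆ closure (x '' Iio (ta γ).1) :=
      closure_mono (image_mono (Iio_subset_Iio (hmono hδγ).le))
    rw [hg0 _ (hsub (hta δ).2.1), hg0 _ (subset_closure (mem_image_of_mem x (hmono hδγ)))]
    rfl
  · exact (hta δ).2.2 γ hγδ

/-- If `K` is a compact Hausdorff space with `hd(K) ≥ λ⁺` for some infinite cardinal `λ`,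
then `K` has a bidiscrete system of cardinality `λ⁺` (where `λ⁺` denotes the cardinal
successor of `λ`). -/
theorem bidiscrete_of_hereditaryDensity_ge_succ
    {K : Type u} [TopologicalSpace K] [CompactSpace K] [T2Space K]
    (l : Cardinal.{u}) (hl : ℵ₀ ≤ l) (h : Order.succ l ≤ hereditaryDensity K) :
    ∃ S : Set (K × K), IsBidiscrete S ∧ #S = Order.succ l := by
  let ι := (Order.succ l).ord.ToType
  have hι : #ι = Order.succ l := mk_ord_toType _
  have hIio : ∀ i : ι, #(Iio i) ≤ l := fun i =>
    Order.lt_succ_iff.mp ((mk_Iio_lt i (by simp [ι])).trans_eq hι)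
  obtain ⟨Y, hY⟩ : ∃ Y : Set K, l < density Y :=
    exists_lt_of_lt_ciSup (Order.succ_le_iff.mp h)
  obtain ⟨x, hx⟩ := exists_isLeftSeparated_of_lt_density hIio hY
  obtain ⟨p, F, hpF⟩ := (hx.comp_isInducing IsInducing.subtypeVal).exists_isBidiscreteFamily
    hl hIio (hι ▸ Order.lt_succ l)
  exact ⟨range p, hpF.isBidiscrete_range, by rw [mk_range_eq _ hpF.injective, hι]⟩
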